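/- Let g be a smooth exhausting strictly plurisubharmonic function on a complex manifold X, let g₀ < g₁ < g₂, let χ : X → [0,1] be smooth with χ = 1 on {g ≤ g₁} and χ = 0 on {g ≥ g₂}, let f be strictly plurisubharmonic on X, and let κ : ℝ → [0,∞) be smooth, vanishing on (−∞,g₀], with κ' > 0 and κ'' ≥ 0 on (g₀,∞). If {g₁ ≤ g ≤ g₂} is compact, then for all sufficiently large C > 0 the function h = χf + Cκ(g) is strictly plurisubharmonic on {g > g₀} ∪ {g ≤ g₁} (i.e. wherever either χf = f or the Levi form of Cκ(g) dominates). -/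

import Mathlib

open Filter Topology


/-- The Levi form of φ : ℂⁿ → ℝ at z in the complex direction v, via real
second directional derivatives:
L_φ(z)(v,v̄) = (1/4)(∂²_t φ(z+tv)|₀ + ∂²_t φ(z+t(iv))|₀). -/
noncomputable def leviForm (n : ℕ) (φ : (Fin n → ℂ) → ℝ) (z v : Fin n → ℂ) : ℝ :=
  (1/4 : ℝ) * (iteratedDeriv 2 (fun t : ℝ => φ (z + t • v)) 0
    + iteratedDeriv 2 (fun t : ℝ => φ (z + t • (Complex.I • v))) 0)


variable {n : ℕ}

lemma hasDerivAt_line (z v : Fin n → ℂ) (t : ℝ) :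
    HasDerivAt (fun s : ℝ => z + s • v) v t := by
  simpa using ((hasDerivAt_id t).smul_const v).const_add z

lemma contDiff_line (z v : Fin n → ℂ) : ContDiff ℝ (⊤ : ℕ∞) (fun t : ℝ => z + t • v) :=
  contDiff_const.add (contDiff_id.smul contDiff_const)

lemma iter2_eq (φ : (Fin n → ℂ) → ℝ) (hφ : ContDiff ℝ (⊤ : ℕ∞) φ) (z v : Fin n → ℂ) :
    iteratedDeriv 2 (fun t : ℝ => φ (z + t • v)) 0 = fderiv ℝ (fderiv ℝ φ) z v v := by
  have hφd : Differentiable ℝ φ := hφ.differentiable (by simp)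
  have hF : ContDiff ℝ (⊤ : ℕ∞) (fderiv ℝ φ) := hφ.fderiv_right (by simp)
  have h1 : deriv (fun t : ℝ => φ (z + t • v)) = fun t => fderiv ℝ φ (z + t • v) v := by
    funext t
    exact (((hφd (z + t • v)).hasFDerivAt).comp_hasDerivAt t (hasDerivAt_line z v t)).deriv
  have he : HasFDerivAt (fun x => fderiv ℝ φ x v)
      ((ContinuousLinearMap.apply ℝ ℝ v).comp (fderiv ℝ (fderiv ℝ φ) z)) z :=
    (ContinuousLinearMap.apply ℝ ℝ v).hasFDerivAt.comp z
      ((hF.differentiable (by simp) z).hasFDerivAt)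
  have h2 : HasDerivAt (fun t : ℝ => fderiv ℝ φ (z + t • v) v)
      (fderiv ℝ (fderiv ℝ φ) z v v) 0 := by
    have hz : z + (0:ℝ) • v = z := by simp
    have h3 := (hz ▸ he : HasFDerivAt _ _ (z + (0:ℝ) • v)).comp_hasDerivAt 0 (hasDerivAt_line z v 0)
    rw [zero_smul, add_zero] at h3
    exact h3
  rw [iteratedDeriv_succ, iteratedDeriv_one, h1]
  exact h2.deriv

lemma iter2_dd (f : ℝ → ℝ) : iteratedDeriv 2 f = deriv (deriv f) := by
  rw [iteratedDeriv_succ, iteratedDeriv_one]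

lemma leviForm_eq (φ : (Fin n → ℂ) → ℝ) (hφ : ContDiff ℝ (⊤ : ℕ∞) φ) (z v : Fin n → ℂ) :
    leviForm n φ z v = (1/4 : ℝ) * (fderiv ℝ (fderiv ℝ φ) z v v
      + fderiv ℝ (fderiv ℝ φ) z (Complex.I • v) (Complex.I • v)) := by
  rw [leviForm, iter2_eq φ hφ z v, iter2_eq φ hφ z (Complex.I • v)]

lemma leviForm_add (φ ψ : (Fin n → ℂ) → ℝ) (hφ : ContDiff ℝ (⊤ : ℕ∞) φ) (hψ : ContDiff ℝ (⊤ : ℕ∞) ψ)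
    (z v : Fin n → ℂ) :
    leviForm n (fun x => φ x + ψ x) z v = leviForm n φ z v + leviForm n ψ z v := by
  rw [leviForm_eq _ (hφ.add hψ), leviForm_eq _ hφ, leviForm_eq _ hψ]
  have h1 : fderiv ℝ (fun x => φ x + ψ x) = fun x => fderiv ℝ φ x + fderiv ℝ ψ x := by
    funext x; exact fderiv_fun_add (hφ.differentiable (by simp) x) (hψ.differentiable (by simp) x)
  have h2 : fderiv ℝ (fderiv ℝ fun x => φ x + ψ x) z
      = fderiv ℝ (fderiv ℝ φ) z + fderiv ℝ (fderiv ℝ ψ) z := by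
    rw [h1]
    exact fderiv_fun_add ((hφ.fderiv_right (m := (⊤ : ℕ∞)) (by simp)).differentiable (by simp) z)
      ((hψ.fderiv_right (m := (⊤ : ℕ∞)) (by simp)).differentiable (by simp) z)
  rw [h2]
  simp only [ContinuousLinearMap.add_apply]
  ring

lemma leviForm_const_mul (φ : (Fin n → ℂ) → ℝ) (hφ : ContDiff ℝ (⊤ : ℕ∞) φ) (C : ℝ)
    (z v : Fin n → ℂ) :
    leviForm n (fun x => C * φ x) z v = C * leviForm n φ z v := by
  rw [leviForm_eq _ (contDiff_const.mul hφ), leviForm_eq _ hφ]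
  have h1 : fderiv ℝ (fun x => C * φ x) = fun x => C • fderiv ℝ φ x := by
    funext x; exact fderiv_const_mul (hφ.differentiable (by simp) x) C
  have h2 : fderiv ℝ (fderiv ℝ fun x => C * φ x) z = C • fderiv ℝ (fderiv ℝ φ) z := by
    rw [h1]
    exact fderiv_fun_const_smul ((hφ.fderiv_right (m := (⊤ : ℕ∞)) (by simp)).differentiable (by simp) z) C
  rw [h2]
  simp only [ContinuousLinearMap.smul_apply, smul_eq_mul]
  ring

lemma leviForm_real_smul (φ : (Fin n → ℂ) → ℝ) (hφ : ContDiff ℝ (⊤ : ℕ∞) φ) (c : ℝ)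
    (z v : Fin n → ℂ) :
    leviForm n φ z (c • v) = c ^ 2 * leviForm n φ z v := by
  rw [leviForm_eq _ hφ, leviForm_eq _ hφ, smul_comm Complex.I c v]
  simp only [map_smul, ContinuousLinearMap.smul_apply, smul_eq_mul]
  ring

lemma leviForm_congr {φ ψ : (Fin n → ℂ) → ℝ} (z : Fin n → ℂ) (h : φ =ᶠ[nhds z] ψ)
    (v : Fin n → ℂ) : leviForm n φ z v = leviForm n ψ z v := by
  have key : ∀ w : Fin n → ℂ,
      iteratedDeriv 2 (fun t : ℝ => φ (z + t • w)) 0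
        = iteratedDeriv 2 (fun t : ℝ => ψ (z + t • w)) 0 := by
    intro w
    have hc : Tendsto (fun t : ℝ => z + t • w) (nhds 0) (nhds z) := by
      have : Continuous (fun t : ℝ => z + t • w) := by continuity
      simpa using this.tendsto 0
    have h0 : (fun t : ℝ => φ (z + t • w)) =ᶠ[nhds 0] fun t => ψ (z + t • w) :=
      h.comp_tendsto hc
    rw [iter2_dd, iter2_dd]
    exact h0.deriv.deriv_eq
  rw [leviForm, leviForm, key v, key (Complex.I • v)]

lemma leviForm_zero (z v : Fin n → ℂ) : leviForm n (fun _ => (0:ℝ)) z v = 0 := by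
  simp [leviForm, iter2_dd]

lemma continuous_leviForm (φ : (Fin n → ℂ) → ℝ) (hφ : ContDiff ℝ (⊤ : ℕ∞) φ) :
    Continuous (fun p : (Fin n → ℂ) × (Fin n → ℂ) => leviForm n φ p.1 p.2) := by
  have h2 : Continuous (fderiv ℝ (fderiv ℝ φ)) :=
    (hφ.fderiv_right (m := (⊤ : ℕ∞)) (by simp)).continuous_fderiv (by simp)
  have heq : (fun p : (Fin n → ℂ) × (Fin n → ℂ) => leviForm n φ p.1 p.2)
      = fun p => (1/4 : ℝ) * (fderiv ℝ (fderiv ℝ φ) p.1 p.2 p.2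
        + fderiv ℝ (fderiv ℝ φ) p.1 (Complex.I • p.2) (Complex.I • p.2)) := by
    funext p; exact leviForm_eq φ hφ p.1 p.2
  rw [heq]
  have hIv : Continuous (fun p : (Fin n → ℂ) × (Fin n → ℂ) => Complex.I • p.2) :=
    (continuous_snd (X := Fin n → ℂ) (Y := Fin n → ℂ)).const_smul Complex.I
  exact continuous_const.mul
    ((((h2.comp continuous_fst).clm_apply continuous_snd).clm_apply continuous_snd).add
      (((h2.comp continuous_fst).clm_apply hIv).clm_apply hIv))

lemma deriv2_comp (κ u : ℝ → ℝ) (hκ : ContDiff ℝ (⊤ : ℕ∞) κ) (hu : ContDiff ℝ (⊤ : ℕ∞) u) :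
    iteratedDeriv 2 (fun t => κ (u t)) 0
      = deriv (deriv κ) (u 0) * (deriv u 0) ^ 2 + deriv κ (u 0) * iteratedDeriv 2 u 0 := by
  have hκd : Differentiable ℝ κ := hκ.differentiable (by simp)
  have hud : Differentiable ℝ u := hu.differentiable (by simp)
  have hκ'd : Differentiable ℝ (deriv κ) := (contDiff_infty_iff_deriv.mp (hκ.of_le (by simp))).2.differentiable (by simp)
  have hu'd : Differentiable ℝ (deriv u) := (contDiff_infty_iff_deriv.mp (hu.of_le (by simp))).2.differentiable (by simp)
  have h1 : deriv (fun t => κ (u t)) = fun t => deriv κ (u t) * deriv u t := by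
    funext t
    exact ((hκd (u t)).hasDerivAt.comp t (hud t).hasDerivAt).deriv
  have ha : HasDerivAt (fun t => deriv κ (u t)) (deriv (deriv κ) (u 0) * deriv u 0) 0 :=
    (hκ'd (u 0)).hasDerivAt.comp 0 (hud 0).hasDerivAt
  have hb : HasDerivAt (deriv u) (deriv (deriv u) 0) 0 := (hu'd 0).hasDerivAt
  have h2 := (ha.fun_mul hb).deriv
  rw [iter2_dd, iter2_dd, h1, h2]
  ring

lemma leviForm_comp (κ : ℝ → ℝ) (g : (Fin n → ℂ) → ℝ) (hκ : ContDiff ℝ (⊤ : ℕ∞) κ)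
    (hg : ContDiff ℝ (⊤ : ℕ∞) g) (z v : Fin n → ℂ) :
    ∃ r : ℝ, 0 ≤ r ∧ leviForm n (fun x => κ (g x)) z v
      = deriv κ (g z) * leviForm n g z v + deriv (deriv κ) (g z) * r := by
  set u1 : ℝ → ℝ := fun t => g (z + t • v) with hu1def
  set u2 : ℝ → ℝ := fun t => g (z + t • (Complex.I • v)) with hu2def
  have hu1 : ContDiff ℝ (⊤ : ℕ∞) u1 := hg.comp (contDiff_line z v)
  have hu2 : ContDiff ℝ (⊤ : ℕ∞) u2 := hg.comp (contDiff_line z (Complex.I • v))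
  refine ⟨(1/4 : ℝ) * ((deriv u1 0) ^ 2 + (deriv u2 0) ^ 2), by positivity, ?_⟩
  have e1 : iteratedDeriv 2 (fun t => κ (u1 t)) 0
      = deriv (deriv κ) (u1 0) * (deriv u1 0) ^ 2 + deriv κ (u1 0) * iteratedDeriv 2 u1 0 :=
    deriv2_comp κ u1 hκ hu1
  have e2 : iteratedDeriv 2 (fun t => κ (u2 t)) 0
      = deriv (deriv κ) (u2 0) * (deriv u2 0) ^ 2 + deriv κ (u2 0) * iteratedDeriv 2 u2 0 :=
    deriv2_comp κ u2 hκ hu2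
  have h10 : u1 0 = g z := by simp [hu1def]
  have h20 : u2 0 = g z := by simp [hu2def]
  have hL : leviForm n (fun x => κ (g x)) z v
      = (1/4 : ℝ) * (iteratedDeriv 2 (fun t => κ (u1 t)) 0 + iteratedDeriv 2 (fun t => κ (u2 t)) 0) := rfl
  have hLg : leviForm n g z v = (1/4 : ℝ) * (iteratedDeriv 2 u1 0 + iteratedDeriv 2 u2 0) := rfl
  rw [hL, e1, e2, h10, h20, hLg]
  ring

/-- Gluing of strictly plurisubharmonic functions: if g is a smooth exhausting
strictly plurisubharmonic function, g₀ < g₁ < g₂, χ is a smooth cut-off with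
χ = 1 on {g ≤ g₁} and χ = 0 on {g ≥ g₂}, f is smooth strictly
plurisubharmonic, κ is smooth, vanishes on (−∞,g₀], with κ' > 0, κ'' ≥ 0 on
(g₀,∞), and {g₁ ≤ g ≤ g₂} is compact, then for all sufficiently large C > 0
the function h = χf + Cκ(g) is strictly plurisubharmonic on
{g > g₀} ∪ {g ≤ g₁}. -/
theorem stmt19 (n : ℕ) (f g χ : (Fin n → ℂ) → ℝ) (κ : ℝ → ℝ)
    (g0 g1 g2 : ℝ) (h01 : g0 < g1) (h12 : g1 < g2)
    (hg : ContDiff ℝ (⊤ : ℕ∞) g)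
    (hgex : ∀ c : ℝ, IsCompact {z | g z ≤ c})
    (hgstrict : ∀ z v, v ≠ 0 → 0 < leviForm n g z v)
    (hf : ContDiff ℝ (⊤ : ℕ∞) f)
    (hfstrict : ∀ z v, v ≠ 0 → 0 < leviForm n f z v)
    (hχ : ContDiff ℝ (⊤ : ℕ∞) χ)
    (hχ01 : ∀ z, χ z ∈ Set.Icc (0 : ℝ) 1)
    (hχ1 : ∀ z, g z ≤ g1 → χ z = 1)
    (hχ0 : ∀ z, g2 ≤ g z → χ z = 0)
    (hκ : ContDiff ℝ (⊤ : ℕ∞) κ)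
    (hκnonneg : ∀ t, 0 ≤ κ t)
    (hκ0 : ∀ t ≤ g0, κ t = 0)
    (hκ' : ∀ t, g0 < t → 0 < deriv κ t)
    (hκ'' : ∀ t, g0 < t → 0 ≤ deriv (deriv κ) t)
    (hcpt : IsCompact {z | g1 ≤ g z ∧ g z ≤ g2}) :
    ∃ C0 : ℝ, 0 < C0 ∧ ∀ C, C0 ≤ C →
      ∀ z, (g0 < g z ∨ g z ≤ g1) → ∀ v, v ≠ 0 →
        0 < leviForm n (fun x => χ x * f x + C * κ (g x)) z v := by
  classical
  -- derivative facts for κ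
  have hκ'0 : ∀ t < g0, deriv κ t = 0 := by
    intro t ht
    have h : κ =ᶠ[nhds t] fun _ => (0:ℝ) := by
      filter_upwards [Iio_mem_nhds ht] with x hx using hκ0 x (le_of_lt hx)
    rw [h.deriv_eq, deriv_const]
  have hκ'g0 : deriv κ g0 = 0 := by
    have hmin : IsLocalMin κ g0 := Filter.Eventually.of_forall fun x => by
      rw [hκ0 g0 le_rfl]; exact hκnonneg x
    exact hmin.deriv_eq_zero
  have hκ'nn : ∀ t, 0 ≤ deriv κ t := by
    intro t
    rcases lt_trichotomy t g0 with h | h | h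
    · rw [hκ'0 t h]
    · rw [h, hκ'g0]
    · exact (hκ' t h).le
  have hκ''0 : ∀ t < g0, deriv (deriv κ) t = 0 := by
    intro t ht
    have h : deriv κ =ᶠ[nhds t] fun _ => (0:ℝ) := by
      filter_upwards [Iio_mem_nhds ht] with x hx using hκ'0 x hx
    rw [h.deriv_eq, deriv_const]
  have hκ''g0 : deriv (deriv κ) g0 = 0 := by
    have hmin : IsLocalMin (deriv κ) g0 := Filter.Eventually.of_forall fun x => by
      rw [hκ'g0]; exact hκ'nn x
    exact hmin.deriv_eq_zero
  have hκ''nn : ∀ t, 0 ≤ deriv (deriv κ) t := by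
    intro t
    rcases lt_trichotomy t g0 with h | h | h
    · rw [hκ''0 t h]
    · rw [h, hκ''g0]
    · exact hκ'' t h
  have hκg : ContDiff ℝ (⊤ : ℕ∞) (fun x => κ (g x)) := hκ.comp hg
  have hχf : ContDiff ℝ (⊤ : ℕ∞) (fun x => χ x * f x) := hχ.mul hf
  -- positivity of the Levi form of κ ∘ g
  have hBnn : ∀ z v, v ≠ 0 → 0 ≤ leviForm n (fun x => κ (g x)) z v := by
    intro z v hv
    obtain ⟨r, hr, heq⟩ := leviForm_comp κ g hκ hg z v
    rw [heq]
    have := hgstrict z v hv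
    have := hκ'nn (g z)
    have := hκ''nn (g z)
    positivity
  have hBpos : ∀ z v, v ≠ 0 → g0 < g z → 0 < leviForm n (fun x => κ (g x)) z v := by
    intro z v hv hgz
    obtain ⟨r, hr, heq⟩ := leviForm_comp κ g hκ hg z v
    rw [heq]
    have h1 := hgstrict z v hv
    have h2 := hκ' (g z) hgz
    have h3 := hκ''nn (g z)
    nlinarith
  -- compact region bounds
  set K := {z | g1 ≤ g z ∧ g z ≤ g2} with hKdef
  set S := Metric.sphere (0 : Fin n → ℂ) 1 with hSdef
  set A := fun p : (Fin n → ℂ) × (Fin n → ℂ) => leviForm n (fun x => χ x * f x) p.1 p.2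
    with hAdef
  set B := fun p : (Fin n → ℂ) × (Fin n → ℂ) => leviForm n (fun x => κ (g x)) p.1 p.2
    with hBdef
  have hTcpt : IsCompact (K ×ˢ S) := hcpt.prod (isCompact_sphere 0 1)
  have key : ∃ C0 : ℝ, 1 ≤ C0 ∧ ∀ C, C0 ≤ C → ∀ p ∈ K ×ˢ S, 0 < A p + C * B p := by
    rcases (K ×ˢ S).eq_empty_or_nonempty with hT | hT
    · exact ⟨1, le_rfl, fun C _ p hp => absurd (hT ▸ hp) (Set.notMem_empty p)⟩
    · obtain ⟨pB, hpB, hB1⟩ := hTcpt.exists_isMinOn hT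
        (continuous_leviForm _ hκg).continuousOn
      obtain ⟨pA, hpA, hA1⟩ := hTcpt.exists_isMinOn hT
        (continuous_leviForm _ hχf).continuousOn
      have hpB2 : pB.2 ≠ 0 := by
        have : ‖pB.2‖ = 1 := mem_sphere_zero_iff_norm.mp hpB.2
        intro h0; rw [h0] at this; simp at this
      have hε : 0 < B pB := hBpos pB.1 pB.2 hpB2 (lt_of_lt_of_le h01 hpB.1.1)
      refine ⟨max 1 ((|A pA| + 1) / B pB), le_max_left _ _, fun C hC p hp => ?_⟩
      have h1 : A pA ≤ A p := isMinOn_iff.mp hA1 p hp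
      have h2 : B pB ≤ B p := isMinOn_iff.mp hB1 p hp
      have hC' : (|A pA| + 1) / B pB ≤ C := le_trans (le_max_right _ _) hC
      have hCB : |A pA| + 1 ≤ C * B pB := (div_le_iff₀ hε).mp hC'
      have hCpos : (0:ℝ) < C := lt_of_lt_of_le one_pos (le_trans (le_max_left _ _) hC)
      have habs : -|A pA| ≤ A pA := neg_abs_le _
      have h3 : C * B pB ≤ C * B p := mul_le_mul_of_nonneg_left h2 hCpos.le
      linarith
  obtain ⟨C0, hC01, hkey⟩ := key
  refine ⟨C0, lt_of_lt_of_le one_pos hC01, fun C hC z _ v hv => ?_⟩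
  have hC1 : (1:ℝ) ≤ C := le_trans hC01 hC
  have hCpos : (0:ℝ) < C := lt_of_lt_of_le one_pos hC1
  have hsplit : leviForm n (fun x => χ x * f x + C * κ (g x)) z v
      = A (z, v) + C * B (z, v) := by
    have e1 : leviForm n (fun x => χ x * f x + C * κ (g x)) z v
        = leviForm n (fun x => χ x * f x) z v + leviForm n (fun x => C * κ (g x)) z v :=
      leviForm_add (fun x => χ x * f x) (fun x => C * κ (g x)) hχf
        (contDiff_const.mul hκg) z v
    have e2 : leviForm n (fun x => C * κ (g x)) z v
        = C * leviForm n (fun x => κ (g x)) z v :=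
      leviForm_const_mul (fun x => κ (g x)) hκg C z v
    rw [e1, e2]
  rw [hsplit]
  rcases lt_or_ge (g z) g1 with hlt | hge1
  · -- χ f = f near z
    have hU : {x | g x < g1} ∈ nhds z :=
      (isOpen_lt hg.continuous continuous_const).mem_nhds hlt
    have hAeq : A (z, v) = leviForm n f z v := by
      refine leviForm_congr z ?_ v
      filter_upwards [hU] with x hx
      rw [hχ1 x hx.le, one_mul]
    rw [hAeq]
    have h1 := hfstrict z v hv
    have h2 := hBnn z v hv
    have h3 : 0 ≤ C * B (z, v) := mul_nonneg hCpos.le h2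
    linarith
  rcases lt_or_ge g2 (g z) with hgt | hge2
  · -- χ f = 0 near z
    have hU : {x | g2 < g x} ∈ nhds z :=
      (isOpen_lt continuous_const hg.continuous).mem_nhds hgt
    have hAeq : A (z, v) = leviForm n (fun _ => (0:ℝ)) z v := by
      refine leviForm_congr z ?_ v
      filter_upwards [hU] with x hx
      rw [hχ0 x hx.le, zero_mul]
    rw [hAeq, leviForm_zero]
    have h1 := hBpos z v hv (by linarith)
    have h2 : 0 < C * B (z, v) := mul_pos hCpos h1
    linarith
  · -- compact middle region
    have hzK : z ∈ K := ⟨hge1, hge2⟩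
    have hvn : ‖v‖ ≠ 0 := norm_ne_zero_iff.mpr hv
    set w : Fin n → ℂ := ‖v‖⁻¹ • v with hwdef
    have hwS : w ∈ S := by
      have hw1 : ‖w‖ = 1 := by
        rw [hwdef, norm_smul, norm_inv, norm_norm]
        exact inv_mul_cancel₀ hvn
      simpa [hSdef, mem_sphere_zero_iff_norm] using hw1
    have hvw : v = ‖v‖ • w := (smul_inv_smul₀ hvn v).symm
    have hA2 : A (z, v) = ‖v‖ ^ 2 * A (z, w) := by
      have h := leviForm_real_smul (fun x => χ x * f x) hχf ‖v‖ z w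
      rw [← hvw] at h
      exact h
    have hB2 : B (z, v) = ‖v‖ ^ 2 * B (z, w) := by
      have h := leviForm_real_smul (fun x => κ (g x)) hκg ‖v‖ z w
      rw [← hvw] at h
      exact h
    have hk := hkey C hC (z, w) (Set.mk_mem_prod hzK hwS)
    have hn2 : 0 < ‖v‖ ^ 2 := by positivity
    have : A (z, v) + C * B (z, v) = ‖v‖ ^ 2 * (A (z, w) + C * B (z, w)) := by
      rw [hA2, hB2]; ring
    rw [this]
    exact mul_pos hn2 hk
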